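/- arXiv:q-alg/9507035 — 4 statements merged into one kernel-verified Lean document; each statement's English description precedes it below -/
import Mathlib

section
/- Let M be a real number and let N and j be natural numbers. Then there exist real coefficients c_0, c_1, ..., c_N, depending only on M, N and j, such that for every real polynomial P of degree at most N, the function F : ℝ → ℝ defined by F(x) = e^{Mx} · P(e^x) satisfies F^{(j)}(0) = ∑_{i=0}^{N} c_i · F^{(i)}(0), where F^{(k)} denotes the k-th derivative of F. -/
/-!
Expanding `P = ∑ aₖ Xᵏ` turns `F x = e^{Mx} P(eˣ)` into the exponential sum `∑ aₖ e^{(M+k)x}`,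
so `F⁽ⁿ⁾(0) = ∑ aₖ (M+k)ⁿ`. Lagrange interpolation at the `N + 1` distinct nodes `M + k`
writes `t ↦ tʲ` on these nodes as a polynomial `∑ cᵢ tⁱ` of degree at most `N`, and its
coefficients are the `cᵢ` of the theorem.
-/

open Finset Polynomial

lemma iteratedDeriv_sum_const_mul_exp {ι : Type*} (s : Finset ι) (a b : ι → ℝ) (n : ℕ)
    (x : ℝ) :
    iteratedDeriv n (fun y => ∑ k ∈ s, a k * Real.exp (b k * y)) x =
      ∑ k ∈ s, a k * b k ^ n * Real.exp (b k * x) := by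
  rw [iteratedDeriv_fun_sum fun k _ => by fun_prop]
  simp [mul_assoc]

lemma exp_mul_eval_exp_eq_sum (M : ℝ) {P : ℝ[X]} {m : ℕ} (hP : P.natDegree < m) (x : ℝ) :
    Real.exp (M * x) * P.eval (Real.exp x) =
      ∑ k ∈ range m, P.coeff k * Real.exp ((M + k) * x) := by
  rw [eval_eq_sum_range' hP, mul_sum]
  refine sum_congr rfl fun k _ => ?_
  rw [← Real.exp_nat_mul, add_mul, Real.exp_add]
  ring

lemma iteratedDeriv_exp_mul_eval_exp_zero (M : ℝ) {P : ℝ[X]} {m : ℕ} (hP : P.natDegree < m)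
    (n : ℕ) :
    iteratedDeriv n (fun x : ℝ => Real.exp (M * x) * P.eval (Real.exp x)) 0 =
      ∑ k ∈ range m, P.coeff k * (M + k) ^ n := by
  simp_rw [exp_mul_eval_exp_eq_sum M hP, iteratedDeriv_sum_const_mul_exp]
  simp

lemma exists_sum_pow_eq_of_injOn {F ι : Type*} [Field F] [DecidableEq ι] {s : Finset ι}
    {v : ι → F} (hv : Set.InjOn v s) (r : ι → F) :
    ∃ c : ℕ → F, ∀ k ∈ s, r k = ∑ i ∈ range #s, c i * v k ^ i := by
  rcases s.eq_empty_or_nonempty with rfl | hs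
  · exact ⟨0, by simp⟩
  set Q := Lagrange.interpolate s v r
  have hQ : Q.natDegree < #s := by
    rcases eq_or_ne Q 0 with h0 | h0
    · simpa [h0] using hs.card_pos
    · exact (natDegree_lt_iff_degree_lt h0).2 (Lagrange.degree_interpolate_lt r hv)
  refine ⟨Q.coeff, fun k hk => ?_⟩
  rw [← eval_eq_sum_range' hQ, Lagrange.eval_interpolate_at_node r hv hk]

/-- For `M : ℝ` and naturals `N`, `j`, there exist coefficients
`c 0, …, c N` (depending only on `M`, `N`, `j`) such that for every real polynomial
`P` of degree at most `N`, the function `F x = e^{M x} * P (e^x)` satisfies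
`F^{(j)}(0) = ∑_{i=0}^{N} c i * F^{(i)}(0)`. -/
theorem stmt_0 (M : ℝ) (N j : ℕ) :
    ∃ c : ℕ → ℝ, ∀ P : Polynomial ℝ, P.natDegree ≤ N →
      iteratedDeriv j (fun x : ℝ => Real.exp (M * x) * P.eval (Real.exp x)) 0 =
        ∑ i ∈ Finset.range (N + 1),
          c i * iteratedDeriv i (fun x : ℝ => Real.exp (M * x) * P.eval (Real.exp x)) 0 := by
  have hinj : Set.InjOn (fun k : ℕ => M + k) (range (N + 1)) := fun k _ l _ h => by
    simpa using h
  obtain ⟨c, hc⟩ := exists_sum_pow_eq_of_injOn hinj fun k => (M + k) ^ j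
  rw [card_range] at hc
  refine ⟨c, fun P hP => ?_⟩
  simp_rw [iteratedDeriv_exp_mul_eval_exp_zero M (Nat.lt_succ_of_le hP), mul_sum]
  rw [sum_comm]
  refine sum_congr rfl fun k hk => ?_
  rw [hc k hk, mul_sum]
  exact sum_congr rfl fun i _ => by ring
end

section
/- Let M be a real number and let N and j be natural numbers. Then there exist real coefficients c_0, c_1, ..., c_N, depending only on M, N and j, such that for every choice of real numbers a_0, a_1, ..., a_N, the function G : ℝ → ℝ defined by G(x) = ∑_{n=0}^{N} a_n · e^{(M+n)x} satisfies G^{(j)}(0) = ∑_{i=0}^{N} c_i · G^{(i)}(0), where G^{(k)} denotes the k-th derivative of G. -/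
/-!
The `k`-th derivative at `0` of `∑ aₙ e^{(M+n)x}` is the weighted power sum `∑ aₙ (M+n)^k`.
Since the nodes `M + n` are distinct, the Lagrange interpolation polynomial of `t ↦ t^j` at
these `N + 1` nodes has degree at most `N` and agrees with `t^j` on every node; its coefficients
are the `cᵢ`, independently of the weights `aₙ`.
-/

open Finset Polynomial

theorem iteratedDeriv_sum_mul_exp_mul {ι : Type*} (s : Finset ι) (a r : ι → ℝ) (k : ℕ) (x : ℝ) :
    iteratedDeriv k (fun x => ∑ n ∈ s, a n * Real.exp (r n * x)) x =
      ∑ n ∈ s, a n * r n ^ k * Real.exp (r n * x) := by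
  rw [iteratedDeriv_fun_sum fun n _ => by fun_prop]
  simp [iteratedDeriv_const_mul_field, mul_assoc]

theorem exists_forall_pow_eq_sum_mul_pow {ι F : Type*} [Field F] {s : Finset ι} {r : ι → F}
    (hr : Set.InjOn r s) (j : ℕ) :
    ∃ c : ℕ → F, ∀ n ∈ s, r n ^ j = ∑ i ∈ range #s, c i * r n ^ i := by
  classical
  rcases s.eq_empty_or_nonempty with rfl | hs
  · exact ⟨0, by simp⟩
  set p := Lagrange.interpolate s r (fun n => r n ^ j)
  have hp : p.natDegree < #s := by
    rcases eq_or_ne p 0 with h | h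
    · simpa [h] using hs.card_pos
    · exact (natDegree_lt_iff_degree_lt h).2 (Lagrange.degree_interpolate_lt _ hr)
  refine ⟨p.coeff, fun n hn => ?_⟩
  rw [← eval_eq_sum_range' hp, Lagrange.eval_interpolate_at_node _ hr hn]

theorem exists_forall_sum_mul_pow_eq {ι F : Type*} [Field F] {s : Finset ι} {r : ι → F}
    (hr : Set.InjOn r s) (j : ℕ) :
    ∃ c : ℕ → F, ∀ a : ι → F,
      ∑ n ∈ s, a n * r n ^ j = ∑ i ∈ range #s, c i * ∑ n ∈ s, a n * r n ^ i := by
  obtain ⟨c, hc⟩ := exists_forall_pow_eq_sum_mul_pow hr j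
  refine ⟨c, fun a => ?_⟩
  calc ∑ n ∈ s, a n * r n ^ j
      = ∑ n ∈ s, ∑ i ∈ range #s, c i * (a n * r n ^ i) := by
        refine sum_congr rfl fun n hn => ?_
        rw [hc n hn, mul_sum]
        exact sum_congr rfl fun i _ => mul_left_comm _ _ _
    _ = ∑ i ∈ range #s, c i * ∑ n ∈ s, a n * r n ^ i := by
        rw [sum_comm]
        simp_rw [mul_sum]

/-- For `M : ℝ` and naturals `N`, `j`, there exist coefficients
`c 0, …, c N` (depending only on `M`, `N`, `j`) such that for all real numbers
`a 0, …, a N`, the function `G x = ∑_{n=0}^{N} a n * e^{(M+n) x}` satisfies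
`G^{(j)}(0) = ∑_{i=0}^{N} c i * G^{(i)}(0)`. -/
theorem stmt_1 (M : ℝ) (N j : ℕ) :
    ∃ c : ℕ → ℝ, ∀ a : ℕ → ℝ,
      iteratedDeriv j
          (fun x : ℝ => ∑ n ∈ Finset.range (N + 1), a n * Real.exp ((M + n) * x)) 0 =
        ∑ i ∈ Finset.range (N + 1),
          c i * iteratedDeriv i
            (fun x : ℝ => ∑ n ∈ Finset.range (N + 1), a n * Real.exp ((M + n) * x)) 0 := by
  have hnodes : Set.InjOn (fun n : ℕ => M + n) (range (N + 1)) :=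
    fun m _ n _ h => by simpa using h
  obtain ⟨c, hc⟩ := exists_forall_sum_mul_pow_eq hnodes j
  refine ⟨c, fun a => ?_⟩
  simpa [iteratedDeriv_sum_mul_exp_mul] using hc a
end

section
/- Let M be a real number, N a natural number, and P a real polynomial of degree at most N. Define F : ℝ → ℝ by F(x) = e^{Mx} · P(e^x). If F^{(k)}(0) = 0 for every k with 0 ≤ k ≤ N, then P is the zero polynomial. -/
/-!
Substituting `t = e^x` turns `e^{Mx} P(e^x)` into the exponential sum `∑ⱼ aⱼ e^{(M+j)x}` with
`aⱼ` the coefficients of `P`. Its `k`-th derivative at `0` is `∑ⱼ aⱼ (M+j)^k`, so the vanishing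
of the first `N + 1` derivatives says that the Vandermonde matrix of the distinct nodes
`M, M+1, …, M+N` kills the coefficient vector, which therefore vanishes.
-/

open Finset Function Polynomial Real

theorem iteratedDeriv_sum_mul_exp_const_mul {ι : Type*} (s : Finset ι) (c ν : ι → ℝ) (k : ℕ)
    (x : ℝ) :
    iteratedDeriv k (fun y => ∑ j ∈ s, c j * exp (ν j * y)) x =
      ∑ j ∈ s, c j * ν j ^ k * exp (ν j * x) := by
  rw [iteratedDeriv_fun_sum fun j _ => by fun_prop]
  simp [mul_assoc]

theorem eq_zero_of_iteratedDeriv_sum_mul_exp_eq_zero {n : ℕ} {c ν : Fin n → ℝ}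
    (hν : Injective ν)
    (h : ∀ k < n, iteratedDeriv k (fun y => ∑ j, c j * exp (ν j * y)) 0 = 0) : c = 0 :=
  Matrix.eq_zero_of_forall_pow_sum_mul_pow_eq_zero hν fun k => by
    simpa [iteratedDeriv_sum_mul_exp_const_mul] using h k k.isLt

theorem exp_mul_mul_eval_exp_eq_sum (M : ℝ) {N : ℕ} {P : ℝ[X]} (hP : P.natDegree ≤ N) (x : ℝ) :
    exp (M * x) * P.eval (exp x) = ∑ j : Fin (N + 1), P.coeff j * exp ((M + (j : ℕ)) * x) := by
  rw [eval_eq_sum_range' (Nat.lt_succ_of_le hP), mul_sum,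
    Fin.sum_univ_eq_sum_range (fun j => P.coeff j * exp ((M + j) * x))]
  refine sum_congr rfl fun j _ => ?_
  rw [add_mul, exp_add, exp_nat_mul]
  ring

/-- If `P` is a real polynomial of degree at most `N`,
`F x = e^{M x} * P (e^x)`, and `F^{(k)}(0) = 0` for all `k ≤ N`,
then `P` is the zero polynomial. -/
theorem stmt_2 (M : ℝ) (N : ℕ) (P : Polynomial ℝ) (hP : P.natDegree ≤ N)
    (h : ∀ k ≤ N,
      iteratedDeriv k (fun x : ℝ => Real.exp (M * x) * P.eval (Real.exp x)) 0 = 0) :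
    P = 0 := by
  have hν : Injective fun j : Fin (N + 1) => M + (j : ℕ) := fun i j hij =>
    Fin.ext (by exact_mod_cast add_left_cancel hij)
  have hcoeff : (fun j : Fin (N + 1) => P.coeff j) = 0 :=
    eq_zero_of_iteratedDeriv_sum_mul_exp_eq_zero hν fun k hk => by
      simpa only [exp_mul_mul_eval_exp_eq_sum M hP] using h k (Nat.lt_succ_iff.mp hk)
  refine (ext_iff_natDegree_le hP (natDegree_zero.trans_le (Nat.zero_le N))).2 fun i hi => ?_
  simpa using congrFun hcoeff ⟨i, Nat.lt_succ_of_le hi⟩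
end

section
/- Let N be a natural number and let M be an integer with -N ≤ M ≤ 0. Let P be a real polynomial of degree at most N, and define F : ℝ → ℝ by F(x) = e^{Mx} · P(e^x). If F(0) = 1 and F^{(k)}(0) = 0 for all k with 1 ≤ k ≤ N, then F(x) = 1 for all real x. -/
/-!
Expanding `P` turns `F(x) = e^{Mx} P(e^x)` into the exponential sum `∑ᵢ pᵢ e^{(M+i)x}` with
distinct frequencies `M + i`, `0 ≤ i ≤ N`, so `F^{(k)}(0) = ∑ᵢ pᵢ (M+i)^k`. Subtracting the
monomial `X^{-M}` (the term with frequency `0`) from `P` gives a polynomial `Q` of degree at most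
`N` whose function `e^{Mx} Q(e^x) = F(x) - 1` has vanishing derivatives of orders `0, …, N` at `0`.
These are `N + 1` linear equations in the coefficients of `Q` with an invertible Vandermonde
matrix, so `Q = 0`.
-/

open Finset Polynomial Real

lemma exp_mul_mul_eval_exp_eq_sum_s10 {n : ℕ} {p : ℝ[X]} (hp : p.natDegree < n) (a x : ℝ) :
    exp (a * x) * p.eval (exp x) = ∑ i ∈ range n, p.coeff i * exp ((a + i) * x) := by
  rw [eval_eq_sum_range' hp, mul_sum]
  refine sum_congr rfl fun i _ => ?_
  rw [← exp_nat_mul, mul_left_comm, ← exp_add]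
  ring_nf

lemma iteratedDeriv_exp_mul_mul_eval_exp_zero (a : ℝ) (p : ℝ[X]) (k : ℕ) :
    iteratedDeriv k (fun x => exp (a * x) * p.eval (exp x)) 0
      = ∑ i ∈ range (p.natDegree + 1), p.coeff i * (a + i) ^ k := by
  simp_rw [exp_mul_mul_eval_exp_eq_sum_s10 p.natDegree.lt_succ_self a]
  rw [iteratedDeriv_fun_sum fun i _ => by fun_prop]
  simp

lemma Polynomial.eq_zero_of_iteratedDeriv_exp_mul_mul_eval_exp_eq_zero (a : ℝ) (p : ℝ[X])
    (h : ∀ k ≤ p.natDegree, iteratedDeriv k (fun x => exp (a * x) * p.eval (exp x)) 0 = 0) :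
    p = 0 := by
  have hcoeff := Matrix.eq_zero_of_forall_pow_sum_mul_pow_eq_zero
    (f := fun j : Fin (p.natDegree + 1) => a + j) (v := fun j => p.coeff j)
    (fun i j hij => Fin.ext (by simpa using hij))
    (fun k => by
      rw [Fin.sum_univ_eq_sum_range (fun j => p.coeff j * (a + j) ^ (k : ℕ)),
        ← iteratedDeriv_exp_mul_mul_eval_exp_zero]
      exact h k (Nat.lt_succ_iff.mp k.isLt))
  rw [← leadingCoeff_eq_zero]
  exact congrFun hcoeff (Fin.last _)

/-- Let `N : ℕ` and `M : ℤ` with `-N ≤ M ≤ 0`, let `P` be a real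
polynomial of degree at most `N`, and let `F x = e^{M x} * P (e^x)`.
If `F(0) = 1` and `F^{(k)}(0) = 0` for `1 ≤ k ≤ N`, then `F x = 1` for all `x`. -/
theorem stmt_10 (N : ℕ) (M : ℤ) (hM₁ : -(N : ℤ) ≤ M) (hM₂ : M ≤ 0)
    (P : Polynomial ℝ) (hP : P.natDegree ≤ N)
    (h0 : Real.exp ((M : ℝ) * 0) * P.eval (Real.exp 0) = 1)
    (h : ∀ k, 1 ≤ k → k ≤ N →
      iteratedDeriv k (fun x : ℝ => Real.exp ((M : ℝ) * x) * P.eval (Real.exp x)) 0 = 0) :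
    ∀ x : ℝ, Real.exp ((M : ℝ) * x) * P.eval (Real.exp x) = 1 := by
  set m := (-M).toNat
  have hm : (M : ℝ) + m = 0 := by
    have : (m : ℤ) = -M := Int.toNat_of_nonneg (by omega)
    rw [← Int.cast_natCast, this]
    simp
  set Q := P - X ^ m
  have hQ : Q.natDegree ≤ N :=
    (natDegree_sub_le _ _).trans (max_le hP ((natDegree_X_pow_le m).trans (by omega)))
  have hQF : (fun x => exp (M * x) * Q.eval (exp x))
      = fun x => -1 + exp (M * x) * P.eval (exp x) := by
    funext x
    rw [eval_sub, eval_pow, eval_X, mul_sub, ← exp_nat_mul, ← exp_add,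
      ← add_mul, hm, zero_mul, exp_zero]
    ring
  have hQ0 : Q = 0 := by
    refine Q.eq_zero_of_iteratedDeriv_exp_mul_mul_eval_exp_eq_zero M fun k hk => ?_
    rw [hQF]
    rcases Nat.eq_zero_or_pos k with rfl | hk₀
    · simp only [mul_zero, exp_zero, one_mul] at h0
      simp [h0]
    · rw [iteratedDeriv_const_add hk₀, h k hk₀ (hk.trans hQ)]
  intro x
  have := congrFun hQF x
  simp only [hQ0, eval_zero, mul_zero] at this
  linarith
end
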